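/- arXiv:2306.02125 — 9 statements merged into one kernel-verified Lean document; each statement's English description precedes it below -/
import Mathlib

section
/- Let q ≥ 3 be odd, and let E = qm + r with m, r natural numbers and 0 ≤ r ≤ q−1. With f as above (f(k) = 2(q+2)⌊k/q⌋ + 2(k mod q) + 2⌈2(k mod q)/q⌉ − 1 for q ∤ k, f(k) = 2(q+2)k/q − 1 for q ∣ k), one has q·∑_{k=1}^{E} f(k) = (q+2)E² + q(q+1)m − 2r² + 2qr + q·⌊2r/q⌋·(2r − q + 1). -/
/-!
Both sides vanish at `E = 0`, so it suffices to check that the right-hand side, read as a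
function of `E` through `m = E / q` and `r = E % q`, increases by `q · f (E + 1)` from `E` to
`E + 1`. For `q` odd and `q ∤ k`, `q` does not divide `2 (k mod q)`, so the ceiling in `f` is the
floor plus one and every rounding becomes a natural-number division. The increment is then a
polynomial identity, separately for `r + 1 < q` and for the wrap-around `r + 1 = q`.
-/

open Finset

lemma Rat.floor_natCast_div_natCast_eq_natCast_div (n d : ℕ) :
    ⌊(n / d : ℚ)⌋ = ((n / d : ℕ) : ℤ) := by
  rw [Rat.floor_natCast_div_natCast, Int.natCast_div]

lemma Rat.ceil_natCast_div_natCast_of_not_dvd {n d : ℕ} (hd : 0 < d) (h : ¬ d ∣ n) :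
    ⌈(n / d : ℚ)⌉ = ((n / d : ℕ) : ℤ) + 1 := by
  rw [Int.ceil_eq_floor_add_one_iff_notMem _ |>.mpr,
    Rat.floor_natCast_div_natCast_eq_natCast_div]
  rintro ⟨z, hz⟩
  rw [eq_div_iff (by positivity)] at hz
  have : (d : ℤ) ∣ n := ⟨z, by exact_mod_cast hz.symm.trans (mul_comm _ _)⟩
  exact h (Int.natCast_dvd_natCast.mp this)

lemma two_mul_div_eq_ite {q r : ℕ} (hr : r < q) : 2 * r / q = if q ≤ 2 * r then 1 else 0 := by
  split_ifs with h
  · exact Nat.div_eq_of_lt_le (by omega) (by omega)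
  · exact Nat.div_eq_of_lt (by omega)

lemma Odd.not_dvd_two_mul_mod {q k : ℕ} (hq : Odd q) (h : ¬ q ∣ k) : ¬ q ∣ 2 * (k % q) := by
  intro hdvd
  have hmod := Nat.eq_zero_of_dvd_of_lt (hq.coprime_two_right.dvd_of_dvd_mul_left hdvd)
    (Nat.mod_lt k hq.pos)
  exact h (Nat.dvd_of_mod_eq_zero hmod)

/-- `f k` for odd `q`, with `⌈2 (k mod q) / q⌉` written as `2 (k mod q) / q + 1`. -/
def czIndex (q k : ℕ) : ℤ :=
  if q ∣ k then 2 * (q + 2) * (k / q : ℕ) - 1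
  else 2 * (q + 2) * (k / q : ℕ) + 2 * (k % q : ℕ) + 2 * ((2 * (k % q) / q : ℕ) + 1) - 1

def czSumClosedForm (q E : ℕ) : ℤ :=
  (q + 2) * E ^ 2 + q * (q + 1) * (E / q : ℕ) - 2 * (E % q : ℕ) ^ 2 + 2 * q * (E % q : ℕ)
    + q * (2 * (E % q) / q : ℕ) * (2 * (E % q : ℕ) - q + 1)

lemma czSumClosedForm_mul_add {q m r : ℕ} (hr : r < q) :
    czSumClosedForm q (q * m + r) = (q + 2) * (q * m + r : ℕ) ^ 2 + q * (q + 1) * m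
      - 2 * r ^ 2 + 2 * q * r + q * (2 * r / q : ℕ) * (2 * r - q + 1) := by
  rw [czSumClosedForm, Nat.mul_add_div (by omega), Nat.div_eq_of_lt hr, Nat.mul_add_mod,
    Nat.mod_eq_of_lt hr, add_zero]

lemma czSumClosedForm_succ {q : ℕ} (hq : Odd q) (E : ℕ) :
    czSumClosedForm q (E + 1) = czSumClosedForm q E + q * czIndex q (E + 1) := by
  obtain ⟨m, r, hr, rfl⟩ : ∃ m r, r < q ∧ E = q * m + r :=
    ⟨E / q, E % q, Nat.mod_lt _ hq.pos, (Nat.div_add_mod E q).symm⟩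
  rcases (show r + 1 < q ∨ r + 1 = q by omega) with hlt | rfl
  · have hndvd : ¬ q ∣ q * m + (r + 1) := by
      rw [Nat.dvd_add_right (dvd_mul_right q m)]
      exact Nat.not_dvd_of_pos_of_lt (by omega) hlt
    rw [add_assoc, czSumClosedForm_mul_add hlt, czSumClosedForm_mul_add hr, czIndex,
      if_neg hndvd, Nat.mul_add_div hq.pos, Nat.div_eq_of_lt hlt, Nat.mul_add_mod,
      Nat.mod_eq_of_lt hlt, two_mul_div_eq_ite hr, two_mul_div_eq_ite hlt]
    split_ifs with h1 h2 h2
    · push_cast; ring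
    -- the floor of `2r/q` jumps only at `q = 2r + 1`, where its coefficient `2r - q + 1` vanishes
    · obtain rfl : q = 2 * r + 1 := by obtain ⟨a, rfl⟩ := hq; omega
      push_cast; ring
    · omega
    · push_cast; ring
  · have hE : (r + 1) * m + r + 1 = (r + 1) * (m + 1) + 0 := by ring
    rw [hE, czSumClosedForm_mul_add (Nat.succ_pos r), czSumClosedForm_mul_add hr, czIndex,
      add_zero, if_pos (dvd_mul_right _ _), Nat.mul_div_cancel_left _ (Nat.succ_pos r),
      Nat.mul_zero, Nat.zero_div, two_mul_div_eq_ite hr]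
    split_ifs with h
    · push_cast; ring
    · obtain rfl : r = 0 := by omega
      push_cast; ring

lemma mul_sum_czIndex {q : ℕ} (hq : Odd q) (n : ℕ) :
    q * ∑ k ∈ Icc 1 n, czIndex q k = czSumClosedForm q n := by
  induction n with
  | zero => simp [czSumClosedForm]
  | succ n ih => rw [sum_Icc_succ_top (by omega), mul_add, ih, czSumClosedForm_succ hq]

theorem stmt_2_general (q m r E : ℕ) (hqodd : Odd q)
    (hEmr : E = q * m + r) (hr : r ≤ q - 1)
    (f : ℕ → ℤ)
    (hf1 : ∀ k : ℕ, 1 ≤ k → ¬ q ∣ k →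
      f k = 2 * ((q : ℤ) + 2) * ((k / q : ℕ) : ℤ) + 2 * ((k % q : ℕ) : ℤ)
              + 2 * ⌈(2 * ((k % q : ℕ) : ℚ)) / q⌉ - 1)
    (hf2 : ∀ k : ℕ, 1 ≤ k → q ∣ k →
      f k = 2 * ((q : ℤ) + 2) * ((k / q : ℕ) : ℤ) - 1) :
    (q : ℤ) * ∑ k ∈ Finset.Icc 1 E, f k
      = ((q : ℤ) + 2) * (E : ℤ) ^ 2 + (q : ℤ) * ((q : ℤ) + 1) * m
          - 2 * (r : ℤ) ^ 2 + 2 * (q : ℤ) * r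
          + (q : ℤ) * ⌊(2 * (r : ℚ)) / q⌋ * (2 * (r : ℤ) - q + 1) := by
  have hf : ∀ k ∈ Icc 1 E, f k = czIndex q k := by
    intro k hk
    have hk1 : 1 ≤ k := (mem_Icc.mp hk).1
    by_cases hdvd : q ∣ k
    · rw [hf2 k hk1 hdvd, czIndex, if_pos hdvd]
    · rw [hf1 k hk1 hdvd, czIndex, if_neg hdvd, ← Rat.ceil_natCast_div_natCast_of_not_dvd
        hqodd.pos (hqodd.not_dvd_two_mul_mod hdvd)]
      push_cast; rfl
  have hrq : r < q := by have := hqodd.pos; omega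
  rw [sum_congr rfl hf, mul_sum_czIndex hqodd, hEmr, czSumClosedForm_mul_add hrq,
    ← Rat.floor_natCast_div_natCast_eq_natCast_div]
  push_cast; rfl

/-- with `f` as in Statement 1 and `E = qm + r`, `0 ≤ r ≤ q−1`,
`q·∑_{k=1}^{E} f(k) = (q+2)E² + q(q+1)m − 2r² + 2qr + q·⌊2r/q⌋·(2r − q + 1)`. -/
theorem stmt_2 (q m r E : ℕ) (hq3 : 3 ≤ q) (hqodd : Odd q)
    (hEmr : E = q * m + r) (hr : r ≤ q - 1)
    (f : ℕ → ℤ)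
    (hf1 : ∀ k : ℕ, 1 ≤ k → ¬ q ∣ k →
      f k = 2 * ((q : ℤ) + 2) * ((k / q : ℕ) : ℤ) + 2 * ((k % q : ℕ) : ℤ)
              + 2 * ⌈(2 * ((k % q : ℕ) : ℚ)) / q⌉ - 1)
    (hf2 : ∀ k : ℕ, 1 ≤ k → q ∣ k →
      f k = 2 * ((q : ℤ) + 2) * ((k / q : ℕ) : ℤ) - 1) :
    (q : ℤ) * ∑ k ∈ Finset.Icc 1 E, f k
      = ((q : ℤ) + 2) * (E : ℤ) ^ 2 + (q : ℤ) * ((q : ℤ) + 1) * m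
          - 2 * (r : ℤ) ^ 2 + 2 * (q : ℤ) * r
          + (q : ℤ) * ⌊(2 * (r : ℚ)) / q⌋ * (2 * (r : ℤ) - q + 1) :=
  stmt_2_general q m r E hqodd hEmr hr f hf1 hf2
end

section
/- Let q ≥ 3 be odd. Define the ECH index I(B,H,E) ∈ ℚ for natural numbers B, E and H ∈ {0,1} by I(B,H,E) = 2EH − H² + (q+2)H + 2qB² + (q+3)B + 4EB + 2qHB + (2/q)E² + (q+1)m − (2/q)r² + 2r + ⌊2r/q⌋(2r − q + 1), where E = qm + r with 0 ≤ r ≤ q−1. Then I(B,H,E) is an even integer. -/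
/-- The ECH index `I(b^B h^H e^E)` of the Reeb current `b^B h^H e^E` for the
perturbed `T(2,q)` contact form on `S³`.  Here `E = qm + r` with `0 ≤ r ≤ q−1`
(so `m = E/q` and `r = E%q` as natural numbers), and `⌊2r/q⌋` is realized by
natural-number division since `0 ≤ 2r/q`. -/
def echI (q B H E : ℕ) : ℚ :=
  2 * E * H - H ^ 2 + (q + 2) * H + 2 * q * B ^ 2 + (q + 3) * B + 4 * E * B
    + 2 * q * H * B + (2 / q) * E ^ 2 + (q + 1) * ((E / q : ℕ) : ℚ)
    - (2 / q) * ((E % q : ℕ) : ℚ) ^ 2 + 2 * ((E % q : ℕ) : ℚ)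
    + ((2 * (E % q) / q : ℕ) : ℚ) * (2 * ((E % q : ℕ) : ℚ) - q + 1)

/-- the ECH index `I(B,H,E)` is an even integer. -/
theorem stmt_4 (q : ℕ) (hq3 : 3 ≤ q) (hqodd : Odd q) (B H E : ℕ) (hH : H ≤ 1) :
    ∃ n : ℤ, echI q B H E = 2 * n := by
  obtain ⟨k, hk⟩ := hqodd
  set m : ℕ := E / q with hm
  set r : ℕ := E % q with hr
  set d : ℕ := 2 * r / q with hd
  refine ⟨(q : ℤ) * B ^ 2 + (k + 2) * B + 2 * E * B + q * m ^ 2 + 2 * m * r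
    + (k + 1) * m + r + d * ((r : ℤ) - k) + H * ((E : ℤ) + k + 1 + q * B), ?_⟩
  have hE : (E : ℚ) = q * m + r := by
    rw [hm, hr]
    exact_mod_cast (Nat.div_add_mod E q).symm
  have hq : (q : ℚ) = 2 * k + 1 := by exact_mod_cast congrArg (Nat.cast : ℕ → ℚ) hk
  have hne : (2 * (k : ℚ) + 1) ≠ 0 := by positivity
  unfold echI
  push_cast
  interval_cases H <;> rw [hE, hq] <;> field_simp <;> ring
end

section
/- Let q ≥ 3 be odd, I(B,H,E) the ECH index formula, and d(B,H,E) = 2qB + qH + 2E the degree. For natural numbers x, y, x', y', i with 0 ≤ i ≤ q−1 and H ∈ {0,1}, if x + y = x' + y' then I(y, H, qx + i) − I(y', H, qx' + i) = 2(y − y'). -/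
/-- if `x + y = x' + y'` (equal degree) then
`I(y,H,qx+i) − I(y',H,qx'+i) = 2(y − y')`. -/
theorem stmt_7 (q : ℕ) (hq3 : 3 ≤ q) (hqodd : Odd q)
    (x y x' y' i H : ℕ) (hi : i ≤ q - 1) (hH : H ≤ 1)
    (hxy : x + y = x' + y') :
    echI q y H (q * x + i) - echI q y' H (q * x' + i)
      = 2 * ((y : ℚ) - (y' : ℚ)) := by
  have hiq : i < q := lt_of_le_of_lt hi (Nat.sub_lt (by omega) one_pos)
  have hdiv : ∀ z : ℕ, (q * z + i) / q = z := fun z => by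
    rw [Nat.mul_add_div (by omega : 0 < q), Nat.div_eq_of_lt hiq, add_zero]
  have hmod : ∀ z : ℕ, (q * z + i) % q = i := fun z => by
    rw [Nat.mul_add_mod]; exact Nat.mod_eq_of_lt hiq
  have hq0 : (q : ℚ) ≠ 0 := by positivity
  have h : (x : ℚ) + y = x' + y' := by exact_mod_cast hxy
  unfold echI
  rw [hdiv, hdiv, hmod, hmod]
  push_cast
  field_simp
  linear_combination (2*(q:ℚ)^2*((x:ℚ)+y+x'+y') + q + 4*q*i + q^2*(1+2*H)) * h
end

section
/- Let q ≥ 3 be odd and I(B,H,E) the ECH index formula. For every m ≥ 1 and every i with 0 ≤ i ≤ (q−3)/2: I(m−1, 1, i + (q−1)/2) + 2 = I(0, 0, qm + i) and I(m, 0, i) + 2 = I(0, 1, q(m−1) + i + (q+1)/2). -/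
theorem echI_eq_of_eq_mul_add {q k r E : ℕ} (B H : ℕ) (hr : r < q) (hE : E = q * k + r) :
    echI q B H E =
      2 * (q * k + r) * H - H ^ 2 + (q + 2) * H + 2 * q * B ^ 2 + (q + 3) * B
        + 4 * (q * k + r) * B + 2 * q * H * B + 2 * k * (q * k + 2 * r) + (q + 1) * k + 2 * r
        + ((2 * r / q : ℕ) : ℚ) * (2 * r - q + 1) := by
  have hq : (q : ℚ) ≠ 0 := by exact_mod_cast (Nat.zero_lt_of_lt hr).ne'
  have hdiv : E / q = k := by
    rw [hE, Nat.mul_add_div (Nat.zero_lt_of_lt hr), Nat.div_eq_of_lt hr, add_zero]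
  have hmod : E % q = r := by rw [hE, Nat.mul_add_mod, Nat.mod_eq_of_lt hr]
  rw [echI, hdiv, hmod, hE]
  push_cast
  field_simp
  ring

theorem floor_correction_of_odd (t r : ℕ) (hr : r < 2 * t + 1) :
    ((2 * r / (2 * t + 1) : ℕ) : ℚ) * (2 * r - ((2 * t + 1 : ℕ) : ℚ) + 1) =
      2 * ((r - t : ℕ) : ℚ) := by
  rcases le_or_gt r t with hrt | hrt
  · rw [Nat.div_eq_of_lt (by omega), Nat.sub_eq_zero_of_le hrt]
    simp
  · rw [Nat.div_eq_of_lt_le (k := 1) (by omega) (by omega), Nat.cast_sub hrt.le]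
    push_cast
    ring

/-- for `m ≥ 1` and `0 ≤ i ≤ (q−3)/2`,
`I(m−1,1,i+(q−1)/2) + 2 = I(0,0,qm+i)` and
`I(m,0,i) + 2 = I(0,1,q(m−1)+i+(q+1)/2)`. -/
theorem stmt_8 (q : ℕ) (hq3 : 3 ≤ q) (hqodd : Odd q)
    (m i : ℕ) (hm : 1 ≤ m) (hi : i ≤ (q - 3) / 2) :
    echI q (m - 1) 1 (i + (q - 1) / 2) + 2 = echI q 0 0 (q * m + i) ∧
      echI q m 0 i + 2 = echI q 0 1 (q * (m - 1) + i + (q + 1) / 2) := by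
  obtain ⟨t, rfl⟩ := hqodd
  have hit : i < t := by omega
  rw [echI_eq_of_eq_mul_add (E := i + (2 * t + 1 - 1) / 2) (k := 0) (r := i + t) _ _
      (by omega) (by omega),
    echI_eq_of_eq_mul_add (E := (2 * t + 1) * m + i) (k := m) (r := i) _ _ (by omega) rfl,
    echI_eq_of_eq_mul_add (E := i) (k := 0) (r := i) _ _ (by omega) (by omega),
    echI_eq_of_eq_mul_add (E := (2 * t + 1) * (m - 1) + i + (2 * t + 1 + 1) / 2) (k := m - 1)
      (r := i + t + 1) _ _ (by omega) (by omega),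
    floor_correction_of_odd t (i + t) (by omega), floor_correction_of_odd t i (by omega),
    floor_correction_of_odd t (i + t + 1) (by omega), Nat.add_sub_cancel,
    Nat.sub_eq_zero_of_le hit.le, show i + t + 1 - t = i + 1 by omega, Nat.cast_sub hm]
  push_cast
  constructor <;> ring
end

section
/- Let q ≥ 3 be odd and I(B,H,E) the ECH index formula. For every m ≥ 1: I(m−1, 1, q−1) + 2 = I(0, 0, qm + (q−1)/2) and I(m, 0, (q−1)/2) + 2 = I(0, 1, qm). -/
theorem echI_of_eq_mul_add {q B H E : ℕ} (m r : ℕ) (hr : r < q) (hE : E = q * m + r) :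
    echI q B H E =
      2 * E * H - H ^ 2 + (q + 2) * H + 2 * q * B ^ 2 + (q + 3) * B + 4 * E * B
        + 2 * q * H * B + 2 * q * m ^ 2 + 4 * m * r + (q + 1) * m + 2 * r
        + ((2 * r / q : ℕ) : ℚ) * (2 * r - q + 1) := by
  have hq : (q : ℚ) ≠ 0 := by exact_mod_cast (show q ≠ 0 by omega)
  have hdiv : E / q = m := by rw [hE, Nat.mul_add_div (by omega), Nat.div_eq_of_lt hr, add_zero]
  have hmod : E % q = r := by rw [hE, Nat.mul_add_mod, Nat.mod_eq_of_lt hr]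
  rw [echI, hdiv, hmod, hE]
  push_cast
  field_simp
  ring

/-- for `m ≥ 1`,
`I(m−1,1,q−1) + 2 = I(0,0,qm+(q−1)/2)` and `I(m,0,(q−1)/2) + 2 = I(0,1,qm)`. -/
theorem stmt_9 (q : ℕ) (hq3 : 3 ≤ q) (hqodd : Odd q) (m : ℕ) (hm : 1 ≤ m) :
    echI q (m - 1) 1 (q - 1) + 2 = echI q 0 0 (q * m + (q - 1) / 2) ∧
      echI q m 0 ((q - 1) / 2) + 2 = echI q 0 1 (q * m) := by
  obtain ⟨k, rfl⟩ := hqodd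
  obtain ⟨n, rfl⟩ : ∃ n, m = n + 1 := ⟨m - 1, by omega⟩
  have h_upper : 2 * (2 * k) / (2 * k + 1) = 1 := Nat.div_eq_of_lt_le (by omega) (by omega)
  have h_lower : 2 * k / (2 * k + 1) = 0 := Nat.div_eq_of_lt (by omega)
  rw [show 2 * k + 1 - 1 = 2 * k by omega, show 2 * k / 2 = k by omega,
    echI_of_eq_mul_add 0 (2 * k) (by omega) (by omega),
    echI_of_eq_mul_add (n + 1) k (by omega) (by omega),
    echI_of_eq_mul_add 0 k (by omega) (by omega),
    echI_of_eq_mul_add (n + 1) 0 (by omega) (by omega),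
    h_upper, h_lower, Nat.mul_zero, Nat.zero_div]
  constructor <;> push_cast <;> ring
end

section
/- Let q ≥ 3 be odd and I(B,H,E) the ECH index formula. For every m ≥ 1 and every i with (q+1)/2 ≤ i ≤ q−1: I(m, 1, i − (q+1)/2) + 2 = I(0, 0, qm + i) and I(m, 0, i) + 2 = I(0, 1, qm + i − (q−1)/2). -/
/-- for `m ≥ 1` and `(q+1)/2 ≤ i ≤ q−1`,
`I(m,1,i−(q+1)/2) + 2 = I(0,0,qm+i)` and `I(m,0,i) + 2 = I(0,1,qm+i−(q−1)/2)`. -/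
theorem stmt_10 (q : ℕ) (hq3 : 3 ≤ q) (hqodd : Odd q)
    (m i : ℕ) (hm : 1 ≤ m) (hi1 : (q + 1) / 2 ≤ i) (hi2 : i ≤ q - 1) :
    echI q m 1 (i - (q + 1) / 2) + 2 = echI q 0 0 (q * m + i) ∧
      echI q m 0 i + 2 = echI q 0 1 (q * m + i - (q - 1) / 2) := by
  obtain ⟨k, rfl⟩ := hqodd
  have hk1 : 1 ≤ k := by omega
  have hi1' : k + 1 ≤ i := by omega
  obtain ⟨j, rfl⟩ : ∃ j, i = k + 1 + j := ⟨i - (k + 1), by omega⟩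
  have hj : j ≤ k - 1 := by omega
  have e1 : k + 1 + j - (2 * k + 1 + 1) / 2 = j := by omega
  have e2 : (2 * k + 1) * m + (k + 1 + j) - (2 * k + 1 - 1) / 2 =
      (2 * k + 1) * m + (j + 1) := by omega
  rw [e1, e2]
  have hq0 : 0 < 2 * k + 1 := by omega
  -- div/mod facts
  have d1 : j % (2 * k + 1) = j := Nat.mod_eq_of_lt (by omega)
  have d2 : j / (2 * k + 1) = 0 := Nat.div_eq_of_lt (by omega)
  have d3 : 2 * j / (2 * k + 1) = 0 := Nat.div_eq_of_lt (by omega)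
  have d4 : ((2 * k + 1) * m + (k + 1 + j)) % (2 * k + 1) = k + 1 + j := by
    rw [Nat.mul_add_mod]; exact Nat.mod_eq_of_lt (by omega)
  have d5 : ((2 * k + 1) * m + (k + 1 + j)) / (2 * k + 1) = m := by
    rw [Nat.mul_add_div hq0, Nat.div_eq_of_lt (by omega)]; omega
  have d6 : 2 * (k + 1 + j) / (2 * k + 1) = 1 :=
    Nat.div_eq_of_lt_le (by omega) (by omega)
  have d7 : (k + 1 + j) % (2 * k + 1) = k + 1 + j := Nat.mod_eq_of_lt (by omega)
  have d8 : (k + 1 + j) / (2 * k + 1) = 0 := Nat.div_eq_of_lt (by omega)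
  have d9 : ((2 * k + 1) * m + (j + 1)) % (2 * k + 1) = j + 1 := by
    rw [Nat.mul_add_mod]; exact Nat.mod_eq_of_lt (by omega)
  have d10 : ((2 * k + 1) * m + (j + 1)) / (2 * k + 1) = m := by
    rw [Nat.mul_add_div hq0, Nat.div_eq_of_lt (by omega)]; omega
  have d11 : 2 * (j + 1) / (2 * k + 1) = 0 := Nat.div_eq_of_lt (by omega)
  have hQ : ((2 * k + 1 : ℕ) : ℚ) ≠ 0 := by positivity
  constructor <;>
  · simp only [echI, d1, d2, d3, d4, d5, d6, d7, d8, d9, d10, d11]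
    push_cast
    field_simp
    ring
end

section
/- Let q ≥ 3 be odd. The map (B,H,E) ↦ I(B,H,E), with I the ECH index formula, is a bijection from the set {(B,H,E) : B, E ∈ ℕ, H ∈ {0,1}} onto the set of nonnegative even integers. -/
/-- `s(r) = r + ⌊2r/q⌋·(r − q/2)`, the "r-part" of the half index. -/
def sval (q r : ℕ) : ℕ := if r ≤ q / 2 then r else 2 * r - q / 2

/-- The half ECH index, as a closed-form natural number. -/
def Jf (q B H E : ℕ) : ℕ :=
  q * (E / q) ^ 2 + 2 * (E / q) * (E % q) + (q / 2 + 1) * (E / q) + sval q (E % q)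
    + q * B ^ 2 + (q / 2 + 2) * B + 2 * E * B + q * H * B + H * (E + q / 2 + 1)

/-- Successor: the next generator in the index ordering. -/
def Sf (q : ℕ) : ℕ × ℕ × ℕ → ℕ × ℕ × ℕ := fun (B, H, E) =>
  if q ≤ E then (B + 1, H, E - q)
  else if H = 1 then (0, 0, q * B + E + q / 2 + 1)
  else if B = 0 ∧ E < q / 2 then (0, 0, E + 1)
  else (0, 1, q * B + E - q / 2)

/-- Enumeration of all generators by iterating the successor. -/
def Tf (q : ℕ) : ℕ → ℕ × ℕ × ℕ
  | 0 => (0, 0, 0)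
  | n + 1 => Sf q (Tf q n)

lemma sval_le {q r : ℕ} (h : r ≤ q / 2) : sval q r = r := if_pos h

lemma sval_ge {q r : ℕ} (h : q / 2 ≤ r) : sval q r = 2 * r - q / 2 := by
  unfold sval; split_ifs with h' <;> omega

lemma echI_eq_two_Jf {q : ℕ} (hq3 : 3 ≤ q) (hqodd : Odd q) (B H E : ℕ) (hH : H ≤ 1) :
    echI q B H E = 2 * (Jf q B H E : ℚ) := by
  obtain ⟨k, hk⟩ := hqodd
  subst hk
  have hk1 : 1 ≤ k := by omega
  have hk2 : (2 * k + 1) / 2 = k := by omega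
  have hq0 : 0 < 2 * k + 1 := by omega
  obtain ⟨m, r, hr, rfl⟩ : ∃ m r, r < 2 * k + 1 ∧ E = (2 * k + 1) * m + r :=
    ⟨E / (2 * k + 1), E % (2 * k + 1), Nat.mod_lt _ hq0, (Nat.div_add_mod E (2 * k + 1)).symm⟩
  have hd : ((2 * k + 1) * m + r) / (2 * k + 1) = m := by
    rw [Nat.mul_add_div hq0, Nat.div_eq_of_lt hr, add_zero]
  have hm : ((2 * k + 1) * m + r) % (2 * k + 1) = r := by
    rw [Nat.mul_add_mod, Nat.mod_eq_of_lt hr]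
  have hQ : ((2 * k + 1 : ℕ) : ℚ) ≠ 0 := by positivity
  unfold echI Jf
  rw [hd, hm, hk2]
  rcases le_or_gt r k with hrk | hrk
  · rw [sval_le (show r ≤ (2 * k + 1) / 2 by omega),
      show 2 * r / (2 * k + 1) = 0 from Nat.div_eq_of_lt (by omega)]
    interval_cases H <;> · push_cast
                           field_simp
                           ring
  · rw [sval_ge (show (2 * k + 1) / 2 ≤ r by omega), hk2,
      show 2 * r / (2 * k + 1) = 1 from Nat.div_eq_of_lt_le (by omega) (by omega)]
    interval_cases H <;> · push_cast [Nat.cast_sub (show k ≤ 2 * r by omega)]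
                           field_simp
                           ring

lemma Jf_succ {q : ℕ} (hq3 : 3 ≤ q) (hqodd : Odd q) (p : ℕ × ℕ × ℕ) (hp : p.2.1 ≤ 1) :
    (Sf q p).2.1 ≤ 1 ∧ Jf q (Sf q p).1 (Sf q p).2.1 (Sf q p).2.2 = Jf q p.1 p.2.1 p.2.2 + 1 := by
  obtain ⟨B, H, E⟩ := p
  simp only at hp
  obtain ⟨k, hk⟩ := hqodd
  subst hk
  have hk1 : 1 ≤ k := by omega
  have hk2 : (2 * k + 1) / 2 = k := by omega
  have hq0 : 0 < 2 * k + 1 := by omega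
  simp only [Sf, hk2]
  split_ifs with h1 h2 h3
  · -- case 1 : q ≤ E, successor (B+1, H, E - q)
    refine ⟨hp, ?_⟩
    obtain ⟨m', r, hr, hE⟩ : ∃ m' r, r < 2 * k + 1 ∧ E = (2 * k + 1) * (m' + 1) + r := by
      refine ⟨E / (2 * k + 1) - 1, E % (2 * k + 1), Nat.mod_lt _ hq0, ?_⟩
      have h5 := Nat.div_add_mod E (2 * k + 1)
      have h6 : 1 ≤ E / (2 * k + 1) := (Nat.one_le_div_iff hq0).2 h1
      have h7 : (2 * k + 1) * (E / (2 * k + 1) - 1 + 1) = (2 * k + 1) * (E / (2 * k + 1)) := by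
        congr 1; omega
      omega
    have hEq : E - (2 * k + 1) = (2 * k + 1) * m' + r := by
      rw [hE, Nat.mul_add]; omega
    have hd1 : ((2 * k + 1) * m' + r) / (2 * k + 1) = m' := by
      rw [Nat.mul_add_div hq0, Nat.div_eq_of_lt hr, add_zero]
    have hm1 : ((2 * k + 1) * m' + r) % (2 * k + 1) = r := by
      rw [Nat.mul_add_mod, Nat.mod_eq_of_lt hr]
    have hd2 : E / (2 * k + 1) = m' + 1 := by
      rw [hE, Nat.mul_add_div hq0, Nat.div_eq_of_lt hr, add_zero]
    have hm2 : E % (2 * k + 1) = r := by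
      rw [hE, Nat.mul_add_mod, Nat.mod_eq_of_lt hr]
    simp only [Jf, hk2]
    rw [hEq, hd1, hm1, hd2, hm2, hE]
    ring
  · -- case 2 : E < q, H = 1, successor (0, 0, q*B + E + k + 1)
    subst h2
    refine ⟨by norm_num, ?_⟩
    have hEd : E / (2 * k + 1) = 0 := Nat.div_eq_of_lt (by omega)
    have hEm : E % (2 * k + 1) = E := Nat.mod_eq_of_lt (by omega)
    rcases lt_or_ge E k with hEk | hEk
    · have hd1 : ((2 * k + 1) * B + E + k + 1) / (2 * k + 1) = B := by
        rw [add_assoc, add_assoc, Nat.mul_add_div hq0, Nat.div_eq_of_lt (by omega)]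
        omega
      have hm1 : ((2 * k + 1) * B + E + k + 1) % (2 * k + 1) = E + k + 1 := by
        rw [add_assoc, add_assoc, Nat.mul_add_mod, Nat.mod_eq_of_lt (by omega)]; omega
      simp only [Jf, hk2, hd1, hm1, hEd, hEm, sval_ge (show (2*k+1)/2 ≤ E + k + 1 by omega),
        sval_le (show E ≤ (2*k+1)/2 by omega), hk2]
      zify [show k ≤ 2 * (E + k + 1) by omega]
      ring
    · have h5 : (2 * k + 1) * B + E + k + 1 = (2 * k + 1) * (B + 1) + (E - k) := by
        rw [Nat.mul_add]; omega
      have hd1 : ((2 * k + 1) * B + E + k + 1) / (2 * k + 1) = B + 1 := by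
        rw [h5, Nat.mul_add_div hq0, Nat.div_eq_of_lt (by omega), add_zero]
      have hm1 : ((2 * k + 1) * B + E + k + 1) % (2 * k + 1) = E - k := by
        rw [h5, Nat.mul_add_mod, Nat.mod_eq_of_lt (by omega)]
      simp only [Jf, hk2, hd1, hm1, hEd, hEm, sval_le (show E - k ≤ (2*k+1)/2 by omega),
        sval_ge (show (2*k+1)/2 ≤ E by omega)]
      zify [show k ≤ 2 * E by omega, show k ≤ E from hEk]
      ring
  · -- case 3 : E < q, H = 0, B = 0, E < k, successor (0, 0, E+1)
    obtain ⟨hB0, hEk⟩ := h3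
    have hH0 : H = 0 := by omega
    subst hB0; subst hH0
    refine ⟨by norm_num, ?_⟩
    have hEd : E / (2 * k + 1) = 0 := Nat.div_eq_of_lt (by omega)
    have hEm : E % (2 * k + 1) = E := Nat.mod_eq_of_lt (by omega)
    have hEd1 : (E + 1) / (2 * k + 1) = 0 := Nat.div_eq_of_lt (by omega)
    have hEm1 : (E + 1) % (2 * k + 1) = E + 1 := Nat.mod_eq_of_lt (by omega)
    simp only [Jf, hk2, hEd, hEm, hEd1, hEm1, sval_le (show E + 1 ≤ (2*k+1)/2 by omega),
      sval_le (show E ≤ (2*k+1)/2 by omega)]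
    ring
  · -- case 4 : E < q, H = 0, (B ≥ 1 or E ≥ k), successor (0, 1, q*B + E - k)
    have hH0 : H = 0 := by omega
    subst hH0
    refine ⟨by norm_num, ?_⟩
    have hEd : E / (2 * k + 1) = 0 := Nat.div_eq_of_lt (by omega)
    have hEm : E % (2 * k + 1) = E := Nat.mod_eq_of_lt (by omega)
    rcases le_or_gt k E with hEk | hEk
    · have h5 : (2 * k + 1) * B + E - k = (2 * k + 1) * B + (E - k) := by omega
      have hd1 : ((2 * k + 1) * B + E - k) / (2 * k + 1) = B := by
        rw [h5, Nat.mul_add_div hq0, Nat.div_eq_of_lt (by omega), add_zero]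
      have hm1 : ((2 * k + 1) * B + E - k) % (2 * k + 1) = E - k := by
        rw [h5, Nat.mul_add_mod, Nat.mod_eq_of_lt (by omega)]
      simp only [Jf, hk2, hd1, hm1, hEd, hEm, sval_le (show E - k ≤ (2*k+1)/2 by omega),
        sval_ge (show (2*k+1)/2 ≤ E by omega)]
      zify [show k ≤ 2 * E by omega, show k ≤ E from hEk,
        show k ≤ (2 * k + 1) * B + E by nlinarith]
      ring
    · have hB1 : 1 ≤ B := by
        rcases Nat.eq_zero_or_pos B with h | h
        · exact absurd ⟨h, by omega⟩ h3
        · exact h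
      obtain ⟨B', rfl⟩ : ∃ B', B = B' + 1 := ⟨B - 1, by omega⟩
      have h5 : (2 * k + 1) * (B' + 1) + E - k = (2 * k + 1) * B' + (k + 1 + E) := by
        rw [Nat.mul_add]; omega
      have hd1 : ((2 * k + 1) * (B' + 1) + E - k) / (2 * k + 1) = B' := by
        rw [h5, Nat.mul_add_div hq0, Nat.div_eq_of_lt (by omega), add_zero]
      have hm1 : ((2 * k + 1) * (B' + 1) + E - k) % (2 * k + 1) = k + 1 + E := by
        rw [h5, Nat.mul_add_mod, Nat.mod_eq_of_lt (by omega)]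
      simp only [Jf, hk2, hd1, hm1, hEd, hEm, sval_ge (show (2*k+1)/2 ≤ k + 1 + E by omega),
        sval_le (show E ≤ (2*k+1)/2 by omega)]
      zify [show k ≤ 2 * (k + 1 + E) by omega,
        show k ≤ (2 * k + 1) * (B' + 1) + E by nlinarith]
      ring

lemma Jf_eq_zero {q : ℕ} (hq3 : 3 ≤ q) {B H E : ℕ} (h : Jf q B H E = 0) :
    B = 0 ∧ H = 0 ∧ E = 0 := by
  unfold Jf at h
  simp only [Nat.add_eq_zero, Nat.mul_eq_zero, pow_eq_zero_iff, two_ne_zero] at h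
  obtain ⟨⟨⟨⟨⟨⟨⟨⟨h1, h2⟩, h3⟩, hs⟩, h4⟩, h5⟩, -⟩, -⟩, h6⟩ := h
  have hB : B = 0 := by omega
  have hH : H = 0 := by omega
  have hm : E / q = 0 := by omega
  have hr : E % q = 0 := by
    rw [sval] at hs; split_ifs at hs <;> omega
  have := Nat.div_add_mod E q
  rw [hm, hr] at this
  exact ⟨hB, hH, by omega⟩

lemma pred_exists {q : ℕ} (hq3 : 3 ≤ q) (hqodd : Odd q) (p : ℕ × ℕ × ℕ) (hp : p.2.1 ≤ 1)
    (hne : p ≠ (0, 0, 0)) : ∃ p' : ℕ × ℕ × ℕ, p'.2.1 ≤ 1 ∧ Sf q p' = p := by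
  obtain ⟨B, H, E⟩ := p
  simp only [ne_eq, Prod.mk.injEq, not_and] at hne
  simp only at hp
  obtain ⟨k, hk⟩ := hqodd
  have hk2 : q / 2 = k := by omega
  rcases Nat.eq_zero_or_pos B with hB | hB
  · subst hB
    interval_cases H
    · -- H = 0, E ≥ 1
      have hE : 1 ≤ E := Nat.pos_of_ne_zero (hne rfl rfl)
      rcases le_or_gt E k with hEk | hEk
      · -- came from (0,0,E-1) via case 3
        refine ⟨(0, 0, E - 1), by simp, ?_⟩
        simp only [Sf, hk2]
        split_ifs with h1 h2 h3
        · exact absurd h1 (by omega)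
        · exact h2.elim
        · simp only [Prod.mk.injEq, true_and]; omega
        · exfalso; simp only [true_and] at h3; omega
      · -- came from ((E-k-1)/q, 1, (E-k-1)%q) via case 2
        refine ⟨((E - k - 1) / q, 1, (E - k - 1) % q), by simp, ?_⟩
        have hmod := Nat.mod_lt (E - k - 1) (show 0 < q by omega)
        have hdm := Nat.div_add_mod (E - k - 1) q
        simp only [Sf, hk2]
        split_ifs with h1 h2 h3 <;>
          simp only [Prod.mk.injEq, true_and, and_true] <;> omega
    · -- H = 1: came from ((E+k)/q, 0, (E+k)%q) via case 4
      refine ⟨((E + k) / q, 0, (E + k) % q), by simp, ?_⟩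
      have hmod := Nat.mod_lt (E + k) (show 0 < q by omega)
      have hdm := Nat.div_add_mod (E + k) q
      simp only [Sf, hk2]
      split_ifs with h1 h2 h3
      · exact absurd h1 (by omega)
      · exact h2.elim
      · exfalso
        obtain ⟨hd, hmk⟩ := h3
        rw [hd, Nat.mul_zero, Nat.zero_add] at hdm
        omega
      · simp only [Prod.mk.injEq, true_and]; omega
  · -- B ≥ 1: came from (B-1, H, E+q) via case 1
    refine ⟨(B - 1, H, E + q), hp, ?_⟩
    simp only [Sf]
    split_ifs with h1 <;>
      simp only [Prod.mk.injEq, true_and, and_true] <;> omega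


/-- `(B,H,E) ↦ I(B,H,E)` is a bijection from the set of triples
with `H ∈ {0,1}` onto the nonnegative even integers. -/
theorem stmt_13 (q : ℕ) (hq3 : 3 ≤ q) (hqodd : Odd q) :
    Set.BijOn (fun p : ℕ × ℕ × ℕ => echI q p.1 p.2.1 p.2.2)
      {p : ℕ × ℕ × ℕ | p.2.1 ≤ 1}
      {x : ℚ | ∃ n : ℕ, x = 2 * n} := by
  have hT1 : ∀ n, (Tf q n).2.1 ≤ 1 := by
    intro n; induction n with
    | zero => simp [Tf]
    | succ n ih => exact (Jf_succ hq3 hqodd _ ih).1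
  have hTJ : ∀ n, Jf q (Tf q n).1 (Tf q n).2.1 (Tf q n).2.2 = n := by
    intro n; induction n with
    | zero => simp [Tf, Jf, sval]
    | succ n ih => rw [Tf, (Jf_succ hq3 hqodd _ (hT1 n)).2, ih]
  have hJT : ∀ n (p : ℕ × ℕ × ℕ), p.2.1 ≤ 1 → Jf q p.1 p.2.1 p.2.2 = n → Tf q n = p := by
    intro n
    induction n with
    | zero =>
      intro p hp hJ
      obtain ⟨h1, h2, h3⟩ := Jf_eq_zero hq3 hJ
      obtain ⟨B, H, E⟩ := p
      simp_all [Tf]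
    | succ n ih =>
      intro p hp hJ
      have hne : p ≠ (0, 0, 0) := by
        rintro rfl
        simp [Jf, sval] at hJ
      obtain ⟨p', hp', hSp'⟩ := pred_exists hq3 hqodd p hp hne
      have h2 := (Jf_succ hq3 hqodd p' hp').2
      rw [hSp'] at h2
      have : Jf q p'.1 p'.2.1 p'.2.2 = n := by omega
      rw [Tf, ih p' hp' this, hSp']
  constructor
  · intro p hp
    exact ⟨Jf q p.1 p.2.1 p.2.2, echI_eq_two_Jf hq3 hqodd _ _ _ hp⟩
  constructor
  · intro p hp p' hp' he
    simp only [Set.mem_setOf_eq] at hp hp'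
    simp only [echI_eq_two_Jf hq3 hqodd _ _ _ hp, echI_eq_two_Jf hq3 hqodd _ _ _ hp'] at he
    have : Jf q p.1 p.2.1 p.2.2 = Jf q p'.1 p'.2.1 p'.2.2 := by
      have h2 : ((Jf q p.1 p.2.1 p.2.2 : ℚ)) = (Jf q p'.1 p'.2.1 p'.2.2 : ℚ) :=
        mul_left_cancel₀ two_ne_zero he
      exact_mod_cast h2
    rw [← hJT _ p hp rfl, this, hJT _ p' hp' rfl]
  · rintro x ⟨n, rfl⟩
    refine ⟨Tf q n, hT1 n, ?_⟩
    simp only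
    rw [echI_eq_two_Jf hq3 hqodd _ _ _ (hT1 n), hTJ n]
end

section
/- Let q ≥ 3 be odd, and define N_k(2,q) to be the (k+1)-st smallest element (counted with multiplicity, starting from N_0 = 0) of the multiset {2m + qn : m, n ∈ ℕ}. If (B,H,E) is the unique triple with B, E ∈ ℕ, H ∈ {0,1} and ECH index I(B,H,E) = 2k, then its degree satisfies 2qB + qH + 2E = N_k(2,q). -/
open Finset

/-- The box `range d ×ˢ range d` only makes the set finite: see `mem_weightedSublevel`. -/
def weightedSublevel (a b d : ℕ) : Finset (ℕ × ℕ) :=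
  (range d ×ˢ range d).filter fun p => a * p.1 + b * p.2 < d

section WeightedSublevel

variable {a b d : ℕ}

theorem mem_weightedSublevel (ha : 0 < a) (hb : 0 < b) {p : ℕ × ℕ} :
    p ∈ weightedSublevel a b d ↔ a * p.1 + b * p.2 < d := by
  have := Nat.le_mul_of_pos_left p.1 ha
  have := Nat.le_mul_of_pos_left p.2 hb
  simp only [weightedSublevel, mem_filter, mem_product, mem_range]
  omega

theorem card_weightedSublevel_comm : #(weightedSublevel a b d) = #(weightedSublevel b a d) :=
  card_equiv (Equiv.prodComm ℕ ℕ) fun p => by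
    simp only [weightedSublevel, mem_filter, mem_product, mem_range, Equiv.prodComm_apply,
      Prod.fst_swap, Prod.snd_swap]
    omega

/-- Removing the column `x = 0` and shifting the rest to the left. -/
theorem card_weightedSublevel_add_left (ha : 0 < a) (hb : 0 < b) (d : ℕ) :
    #(weightedSublevel a b (d + a)) = #(weightedSublevel a b d) + ((d + a - 1) / b + 1) := by
  rw [← card_filter_add_card_filter_not (fun p => p.1 = 0), add_comm,
    ← card_range ((d + a - 1) / b + 1)]
  congr 1
  · refine card_nbij' (fun p => (p.1 - 1, p.2)) (fun p => (p.1 + 1, p.2)) ?_ ?_ ?_ ?_ <;>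
      rintro ⟨_ | m, n⟩ <;>
      simp [mem_weightedSublevel ha hb, mul_add_one] <;> omega
  · refine card_nbij' Prod.snd (fun n => (0, n)) ?_ ?_ ?_ ?_ <;>
      rintro ⟨m, n⟩ <;>
      simp +contextual [mem_weightedSublevel ha hb, Nat.le_div_iff_mul_le hb, mul_comm _ b] <;>
      omega

theorem card_weightedSublevel_add_right (ha : 0 < a) (hb : 0 < b) (d : ℕ) :
    #(weightedSublevel a b (d + b)) = #(weightedSublevel a b d) + ((d + b - 1) / a + 1) := by
  rw [card_weightedSublevel_comm, card_weightedSublevel_add_left hb ha, card_weightedSublevel_comm]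

/-- The points `(x + b j, y + a (n - j))`, `j ≤ n`, all lie on the level `a (x + b n) + b y`. -/
theorem card_weightedSublevel_add_le (ha : 0 < a) (hb : 0 < b) (x y n : ℕ) :
    #(weightedSublevel a b (a * (x + b * n) + b * y)) + (n + 1) ≤
      #(weightedSublevel a b (a * (x + b * n) + b * y + 1)) := by
  classical
  set d := a * (x + b * n) + b * y
  set φ : ℕ → ℕ × ℕ := fun j => (x + b * j, y + a * (n - j))
  have hφ : ∀ j ∈ range (n + 1), a * (φ j).1 + b * (φ j).2 = d := by
    intro j hj
    obtain ⟨c, rfl⟩ := Nat.exists_eq_add_of_le (Nat.lt_succ_iff.1 (mem_range.1 hj))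
    simp only [φ, d, Nat.add_sub_cancel_left]
    ring
  have hφ_inj : Set.InjOn φ (range (n + 1)) := fun i _ j _ h => by
    simpa [φ, hb.ne'] using congrArg Prod.fst h
  have hdisj : Disjoint (weightedSublevel a b d) ((range (n + 1)).image φ) := by
    simp only [disjoint_left, mem_image, mem_weightedSublevel ha hb, not_exists, not_and]
    rintro p hp j hj rfl
    exact hp.ne (hφ j hj)
  calc #(weightedSublevel a b d) + (n + 1)
      = #(weightedSublevel a b d ∪ (range (n + 1)).image φ) := by
        rw [card_union_of_disjoint hdisj, card_image_of_injOn hφ_inj, card_range]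
    _ ≤ #(weightedSublevel a b (d + 1)) := by
        refine card_le_card (union_subset (fun p hp => ?_) (fun p hp => ?_))
        · rw [mem_weightedSublevel ha hb] at hp ⊢
          omega
        · obtain ⟨j, hj, rfl⟩ := mem_image.1 hp
          rw [mem_weightedSublevel ha hb, hφ j hj]
          omega

end WeightedSublevel

theorem Monotone.lt_iff_lt_card_of_equiv {α : Type*} {N : ℕ → ℕ} (hN : Monotone N)
    (g : ℕ ≃ α) {f : α → ℕ} (hNf : ∀ k, N k = f (g k)) {d : ℕ} {s : Finset α}
    (hs : ∀ x, x ∈ s ↔ f x < d) (j : ℕ) :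
    N j < d ↔ j < #s := by
  set T := s.map g.symm.toEmbedding
  have hT : ∀ i, i ∈ T ↔ N i < d := by simp [T, mem_map_equiv, hs, hNf]
  rw [← show #T = #s from card_map _]
  constructor
  · intro hj
    have : range (j + 1) ⊆ T := fun i hi =>
      (hT i).2 ((hN (Nat.lt_succ_iff.1 (mem_range.1 hi))).trans_lt hj)
    simpa using card_le_card this
  · intro hj
    by_contra! hNj
    have : T ⊆ range j := fun i hi => mem_range.2 (hN.reflect_lt (((hT i).1 hi).trans_le hNj))
    have := card_le_card this
    rw [card_range] at this
    omega

section Index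

variable {q m r : ℕ}

theorem echI_eq_echI_zero_zero_add (q B H E : ℕ) :
    echI q B H E = echI q 0 0 E + (2 * E * H - H ^ 2 + (q + 2) * H + 2 * q * B ^ 2
      + (q + 3) * B + 4 * E * B + 2 * q * H * B) := by
  simp only [echI]
  push_cast
  ring

/-- `2 * r + 1 - q` is truncated: `⌊2r/q⌋ ∈ {0, 1}` switches on exactly when it is positive. -/
theorem cast_two_mul_div_mul_eq_cast_sub (hr : r < q) :
    ((2 * r / q : ℕ) : ℚ) * (2 * r - q + 1) = ((2 * r + 1 - q : ℕ) : ℚ) := by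
  rcases lt_or_ge (2 * r) q with h | h
  · rw [Nat.div_eq_of_lt h, Nat.sub_eq_zero_of_le h]
    simp
  · rw [Nat.div_eq_of_lt_le (k := 1) (by omega) (by omega), Nat.cast_sub (by omega)]
    push_cast
    ring

theorem echI_zero_zero_mul_add (hr : r < q) :
    echI q 0 0 (q * m + r) = ((2 * q * m ^ 2 + 4 * m * r + (q + 1) * m + 2 * r
      + (2 * r + 1 - q) : ℕ) : ℚ) := by
  have hq : 0 < q := by omega
  have hdiv : (q * m + r) / q = m := by
    rw [add_comm, Nat.add_mul_div_left _ _ hq, Nat.div_eq_of_lt hr, zero_add]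
  have hmod : (q * m + r) % q = r := by rw [Nat.mul_add_mod_self_left, Nat.mod_eq_of_lt hr]
  simp only [echI, hdiv, hmod, cast_two_mul_div_mul_eq_cast_sub hr]
  push_cast
  field_simp
  ring

theorem echI_zero_zero_succ (hq : Odd q) (E : ℕ) :
    echI q 0 0 (E + 1) = echI q 0 0 E + 2 * (((2 * E + 1) / q + 1 : ℕ) : ℚ) := by
  have hq0 : 0 < q := hq.pos
  obtain ⟨m, r, hr, rfl⟩ : ∃ m r, r < q ∧ E = q * m + r :=
    ⟨E / q, E % q, Nat.mod_lt _ hq0, (Nat.div_add_mod E q).symm⟩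
  have hdiv : (2 * (q * m + r) + 1) / q = 2 * m + (2 * r + 1) / q := by
    rw [show 2 * (q * m + r) + 1 = 2 * r + 1 + q * (2 * m) by ring, Nat.add_mul_div_left _ _ hq0]
    ring
  rw [hdiv, echI_zero_zero_mul_add hr]
  rcases Nat.lt_or_ge (r + 1) q with hr' | hr'
  · rw [show q * m + r + 1 = q * m + (r + 1) by ring, echI_zero_zero_mul_add hr']
    have hc : (2 * r + 1) / q = if 2 * r + 1 < q then 0 else 1 := by
      split_ifs with h
      exacts [Nat.div_eq_of_lt h, Nat.div_eq_of_lt_le (k := 1) (by omega) (by omega)]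
    -- oddness of `q` rules out `2r + 2 = q`, where the two sides differ by one
    obtain ⟨h, rfl⟩ := hq
    rw [hc]
    norm_cast
    split_ifs <;> simp only [mul_add] <;> omega
  · obtain rfl : q = r + 1 := by omega
    rw [show (r + 1) * m + r + 1 = (r + 1) * (m + 1) + 0 by ring, echI_zero_zero_mul_add hq0,
      Nat.div_eq_of_lt_le (k := 1) (by omega) (by omega), Nat.sub_eq_zero_of_le (by omega),
      show 2 * r + 1 - (r + 1) = r by omega]
    push_cast
    ring

theorem echI_zero_zero_eq_two_mul_card (hq : Odd q) (E : ℕ) :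
    echI q 0 0 E = 2 * #(weightedSublevel 2 q (2 * E)) := by
  induction E with
  | zero => simp [echI, weightedSublevel]
  | succ E ih =>
    rw [echI_zero_zero_succ hq, ih, mul_add_one, card_weightedSublevel_add_left two_pos hq.pos]
    push_cast
    ring

theorem two_mul_card_weightedSublevel_add_mul (hq : Odd q) (E B : ℕ) {H : ℕ} (hH : H ≤ 1) :
    2 * #(weightedSublevel 2 q (2 * E + q * (2 * B + H))) = 2 * #(weightedSublevel 2 q (2 * E))
      + 4 * E * B + 2 * q * B ^ 2 + (q + 1) * B + H * (2 * E + 2 * q * B + q + 1) := by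
  obtain ⟨h, hh⟩ := hq
  have hrow := card_weightedSublevel_add_right two_pos (show 0 < q by omega)
  have hrow_even : ∀ c, #(weightedSublevel 2 q (2 * c + q)) =
      #(weightedSublevel 2 q (2 * c)) + (c + h + 1) := fun c => by
    rw [hrow]
    omega
  have hrow_odd : ∀ c, #(weightedSublevel 2 q (2 * c + q + q)) =
      #(weightedSublevel 2 q (2 * c + q)) + (c + q) := fun c => by
    rw [hrow]
    omega
  have hrows : ∀ B, 2 * #(weightedSublevel 2 q (2 * (E + q * B))) =
      2 * #(weightedSublevel 2 q (2 * E)) + 4 * E * B + 2 * q * B ^ 2 + (q + 1) * B := by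
    intro B
    induction B with
    | zero => simp
    | succ B ih =>
      rw [show 2 * (E + q * (B + 1)) = 2 * (E + q * B) + q + q by ring, hrow_odd, hrow_even]
      linarith
  interval_cases H
  · rw [show 2 * E + q * (2 * B + 0) = 2 * (E + q * B) by ring, hrows]
    ring
  · rw [show 2 * E + q * (2 * B + 1) = 2 * (E + q * B) + q by ring, hrow_even]
    linarith [hrows B]

theorem echI_eq_two_mul_card (hq : Odd q) (B E : ℕ) {H : ℕ} (hH : H ≤ 1) :
    echI q B H E = 2 * ((#(weightedSublevel 2 q (2 * E + q * (2 * B + H))) + B : ℕ) : ℚ) := by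
  have hcard : (2 * #(weightedSublevel 2 q (2 * E + q * (2 * B + H))) : ℚ) =
      2 * #(weightedSublevel 2 q (2 * E)) + 4 * E * B + 2 * q * B ^ 2 + (q + 1) * B
        + H * (2 * E + 2 * q * B + q + 1) := by
    exact_mod_cast two_mul_card_weightedSublevel_add_mul hq E B hH
  rw [echI_eq_echI_zero_zero_add, echI_zero_zero_eq_two_mul_card hq]
  interval_cases H <;> push_cast at hcard ⊢ <;> linarith

end Index

theorem stmt_15_general (q : ℕ) (hqodd : Odd q)
    (N : ℕ → ℕ) (hmono : Monotone N) (g : ℕ ≃ ℕ × ℕ)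
    (hN : ∀ k, N k = 2 * (g k).1 + q * (g k).2)
    (B H E k : ℕ) (hH : H ≤ 1) (hI : echI q B H E = 2 * k) :
    2 * q * B + q * H + 2 * E = N k := by
  have hq := hqodd.pos
  set d := 2 * E + q * (2 * B + H)
  have hk : k = #(weightedSublevel 2 q d) + B := by
    have := hI.symm.trans (echI_eq_two_mul_card hqodd B E hH)
    exact_mod_cast mul_left_cancel₀ two_ne_zero this
  have hN_lt : ∀ c j, N j < c ↔ j < #(weightedSublevel 2 q c) := fun c =>
    hmono.lt_iff_lt_card_of_equiv g hN fun _ => mem_weightedSublevel two_pos hq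
  have hgap := card_weightedSublevel_add_le two_pos hq E H B
  rw [show 2 * (E + q * B) + q * H = d by ring] at hgap
  have hle : d ≤ N k := not_lt.1 fun h => by have := (hN_lt d k).1 h; omega
  have hlt : N k < d + 1 := (hN_lt (d + 1) k).2 (by omega)
  rw [show N k = d by omega]
  ring

/-- if `N : ℕ → ℕ` enumerates the multiset `{2m + qn : m,n ∈ ℕ}`
in increasing order with multiplicity (i.e. `N` is monotone and factors through
a bijection with `ℕ × ℕ`), and `(B,H,E)` with `H ∈ {0,1}` has ECH index
`I(B,H,E) = 2k`, then `2qB + qH + 2E = N k`. -/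
theorem stmt_15 (q : ℕ) (hq3 : 3 ≤ q) (hqodd : Odd q)
    (N : ℕ → ℕ) (hmono : Monotone N) (g : ℕ ≃ ℕ × ℕ)
    (hN : ∀ k, N k = 2 * (g k).1 + q * (g k).2)
    (B H E k : ℕ) (hH : H ≤ 1) (hI : echI q B H E = 2 * k) :
    2 * q * B + q * H + 2 * E = N k :=
  stmt_15_general q hqodd N hmono g hN B H E k hH hI
end

section
/- Let q ≥ 3 be odd. If (B,H,E) and (B',H',E') are triples with B, E, B', E' ∈ ℕ and H, H' ∈ {0,1}, and if I(B,H,E) < I(B',H',E'), then 2qB + qH + 2E ≤ 2qB' + qH' + 2E'; that is, degree is a monotone nondecreasing function of the ECH index on generators. -/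
set_option maxHeartbeats 1600000

private lemma lemA (q k M r M' r' u u' : ℤ) (hq : q = 2*k+1) (hk : 1 ≤ k)
    (hM : 0 ≤ M) (hM' : 0 ≤ M')
    (hr0 : 0 ≤ r) (hrq : r < q) (hr'0 : 0 ≤ r') (hr'q : r' < q)
    (hu : u = 0 ∧ 2*r < q ∨ u = 1 ∧ q ≤ 2*r)
    (hu' : u' = 0 ∧ 2*r' < q ∨ u' = 1 ∧ q ≤ 2*r')
    (hn : q*M' + r' + 1 ≤ q*M + r) :
    2*q*M'^2 + 4*r'*M' + (q+1)*M' + 2*r' + u'*(2*r'-q+1) + 2*M'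
      ≤ 2*q*M^2 + 4*r*M + (q+1)*M + 2*r + u*(2*r-q+1) := by
  have hMM' : M' ≤ M := by nlinarith
  rcases eq_or_lt_of_le hMM' with h | h
  · subst h
    have hrr : r' + 1 ≤ r := by nlinarith
    rcases hu with ⟨hu, h2r⟩ | ⟨hu, h2r⟩ <;> rcases hu' with ⟨hu', h2r'⟩ | ⟨hu', h2r'⟩ <;>
      subst hu <;> subst hu' <;> nlinarith
  · have h1 : M' + 1 ≤ M := h
    have X1 : 0 ≤ q * ((M - M' - 1) * (M + M' + 1)) :=
      mul_nonneg (by linarith) (mul_nonneg (by linarith) (by linarith))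
    have X2 : 0 ≤ (q - 1 - r') * M' := mul_nonneg (by linarith) hM'
    have X3 : 0 ≤ r * M := mul_nonneg hr0 hM
    rcases hu with ⟨hu, h2r⟩ | ⟨hu, h2r⟩ <;> rcases hu' with ⟨hu', h2r'⟩ | ⟨hu', h2r'⟩ <;>
      subst hu <;> subst hu' <;> nlinarith [X1, X2, X3]

private lemma lemC (q k M r M' r' u u' : ℤ) (hq : q = 2*k+1) (hk : 1 ≤ k)
    (hM : 0 ≤ M) (hM' : 0 ≤ M')
    (hr0 : 0 ≤ r) (hrq : r < q) (hr'0 : 0 ≤ r') (hr'q : r' < q)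
    (hu : u = 0 ∧ 2*r < q ∨ u = 1 ∧ q ≤ 2*r)
    (hu' : u' = 0 ∧ 2*r' < q ∨ u' = 1 ∧ q ≤ 2*r')
    (hn : q*M' + r' ≤ q*M + r + k) :
    2*q*M'^2 + 4*r'*M' + (q+1)*M' + 2*r' + u'*(2*r'-q+1) + 2*M'
      ≤ 2*q*M^2 + 4*r*M + (q+1)*M + 2*r + u*(2*r-q+1) + 2*(q*M+r) + q + 1 := by
  have hMM' : M' ≤ M + 1 := by nlinarith
  rcases eq_or_lt_of_le hMM' with h | h
  · subst h
    have hrr : r' + k + 1 ≤ r := by nlinarith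
    have hu1 : u = 1 := by rcases hu with ⟨h1, h2⟩ | ⟨h1, h2⟩ <;> [nlinarith; exact h1]
    subst hu1
    have X3 : 0 ≤ (r - r' - k - 1) * M := mul_nonneg (by linarith) hM
    rcases hu' with ⟨hu', h2r'⟩ | ⟨hu', h2r'⟩ <;> subst hu' <;> nlinarith [X3]
  · have h1 : M' ≤ M := by linarith
    rcases eq_or_lt_of_le h1 with h2 | h2
    · subst h2
      have hrr : r' ≤ r + k := by nlinarith
      have X4 : 0 ≤ (r + k - r') * M' := mul_nonneg (by linarith) hM'
      rcases hu with ⟨hu, h2r⟩ | ⟨hu, h2r⟩ <;> rcases hu' with ⟨hu', h2r'⟩ | ⟨hu', h2r'⟩ <;>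
        subst hu <;> subst hu' <;> nlinarith [X4]
    · have h3 : M' + 1 ≤ M := h2
      have X1 : 0 ≤ q * ((M - M') * (M + M')) :=
        mul_nonneg (by linarith) (mul_nonneg (by linarith) (by linarith))
      have X2 : 0 ≤ (q - 1 - r') * M' := mul_nonneg (by linarith) hM'
      have X8 : 0 ≤ r * M := mul_nonneg hr0 hM
      have X10 : 0 ≤ q * ((M - M' - 1) * M') :=
        mul_nonneg (by linarith) (mul_nonneg (by linarith) hM')
      have X11 : 0 ≤ q * ((M - M') * (M - 1)) :=
        mul_nonneg (by linarith) (mul_nonneg (by linarith) (by linarith))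
      rcases hu with ⟨hu, h2r⟩ | ⟨hu, h2r⟩ <;> rcases hu' with ⟨hu', h2r'⟩ | ⟨hu', h2r'⟩ <;>
        subst hu <;> subst hu' <;> nlinarith [X1, X2, X8, X10, X11]

private lemma lemD (q k M r M' r' u u' : ℤ) (hq : q = 2*k+1) (hk : 1 ≤ k)
    (hM : 0 ≤ M) (hM' : 0 ≤ M')
    (hr0 : 0 ≤ r) (hrq : r < q) (hr'0 : 0 ≤ r') (hr'q : r' < q)
    (hu : u = 0 ∧ 2*r < q ∨ u = 1 ∧ q ≤ 2*r)
    (hu' : u' = 0 ∧ 2*r' < q ∨ u' = 1 ∧ q ≤ 2*r')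
    (hn : q*M' + r' + k + 1 ≤ q*M + r) :
    2*q*M'^2 + 4*r'*M' + (q+1)*M' + 2*r' + u'*(2*r'-q+1) + 2*M' + 2*(q*M'+r') + q + 1
      ≤ 2*q*M^2 + 4*r*M + (q+1)*M + 2*r + u*(2*r-q+1) := by
  have hMM' : M' ≤ M := by nlinarith
  rcases eq_or_lt_of_le hMM' with h | h
  · subst h
    have hrr : r' + k + 1 ≤ r := by nlinarith
    have hu1 : u = 1 := by rcases hu with ⟨h1, h2⟩ | ⟨h1, h2⟩ <;> [nlinarith; exact h1]
    have hu0 : u' = 0 := by rcases hu' with ⟨h1, h2⟩ | ⟨h1, h2⟩ <;> [exact h1; nlinarith]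
    subst hu1; subst hu0
    have X3 : 0 ≤ (r - r' - k - 1) * M' := mul_nonneg (by linarith) hM'
    nlinarith [X3]
  · have h3 : M' + 1 ≤ M := h
    rcases eq_or_lt_of_le h3 with h4 | h4
    · have hrr : r' ≤ r + k := by nlinarith
      have X5 : 0 ≤ (r - r' + k) * M' := mul_nonneg (by linarith) hM'
      rcases hu with ⟨hu, h2r⟩ | ⟨hu, h2r⟩ <;> rcases hu' with ⟨hu', h2r'⟩ | ⟨hu', h2r'⟩ <;>
        subst hu <;> subst hu' <;> (subst h4; nlinarith [X5])
    · have h5 : M' + 2 ≤ M := by omega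
      have X1 : 0 ≤ q * ((M - M' - 1) * (M + M' + 1)) :=
        mul_nonneg (by linarith) (mul_nonneg (by linarith) (by linarith))
      have X2 : 0 ≤ (q - 1 - r') * M' := mul_nonneg (by linarith) hM'
      have X8 : 0 ≤ r * M := mul_nonneg hr0 hM
      have X13 : 0 ≤ q * ((M - M' - 2) * (M - M')) :=
        mul_nonneg (by linarith) (mul_nonneg (by linarith) (by linarith))
      have X14 : 0 ≤ q * ((M - M' - 2) * M') :=
        mul_nonneg (by linarith) (mul_nonneg (by linarith) hM')
      rcases hu with ⟨hu, h2r⟩ | ⟨hu, h2r⟩ <;> rcases hu' with ⟨hu', h2r'⟩ | ⟨hu', h2r'⟩ <;>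
        subst hu <;> subst hu' <;> nlinarith [X1, X2, X8, X13, X14]

private lemma glue (q k B H E m r u B' H' E' m' r' u' : ℤ)
    (hq : q = 2*k+1) (hk : 1 ≤ k)
    (hB : 0 ≤ B) (hB' : 0 ≤ B') (hm : 0 ≤ m) (hm' : 0 ≤ m')
    (hH : H = 0 ∨ H = 1) (hH' : H' = 0 ∨ H' = 1)
    (hE : E = q*m + r) (hE' : E' = q*m' + r')
    (hr0 : 0 ≤ r) (hrq : r < q) (hr'0 : 0 ≤ r') (hr'q : r' < q)
    (hu : u = 0 ∧ 2*r < q ∨ u = 1 ∧ q ≤ 2*r)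
    (hu' : u' = 0 ∧ 2*r' < q ∨ u' = 1 ∧ q ≤ 2*r')
    (hd : 2*q*B' + q*H' + 2*E' + 1 ≤ 2*q*B + q*H + 2*E) :
    2*E'*H' + (q+1)*H' + 2*q*B'^2 + (q+3)*B' + 4*E'*B' + 2*q*H'*B'
      + 2*q*m'^2 + 4*m'*r' + (q+1)*m' + 2*r' + u'*(2*r'-q+1)
    ≤ 2*E*H + (q+1)*H + 2*q*B^2 + (q+3)*B + 4*E*B + 2*q*H*B
      + 2*q*m^2 + 4*m*r + (q+1)*m + 2*r + u*(2*r-q+1) := by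
  subst hE; subst hE'
  have hM : 0 ≤ B + m := by linarith
  have hM' : 0 ≤ B' + m' := by linarith
  rcases hH with h | h <;> rcases hH' with h' | h' <;> subst h <;> subst h'
  · have hn : q*(B'+m') + r' + 1 ≤ q*(B+m) + r := by nlinarith
    have := lemA q k (B+m) r (B'+m') r' u u' hq hk hM hM' hr0 hrq hr'0 hr'q hu hu' hn
    nlinarith [this]
  · have hn : q*(B'+m') + r' + k + 1 ≤ q*(B+m) + r := by nlinarith
    have := lemD q k (B+m) r (B'+m') r' u u' hq hk hM hM' hr0 hrq hr'0 hr'q hu hu' hn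
    nlinarith [this]
  · have hn : q*(B'+m') + r' ≤ q*(B+m) + r + k := by nlinarith
    have := lemC q k (B+m) r (B'+m') r' u u' hq hk hM hM' hr0 hrq hr'0 hr'q hu hu' hn
    nlinarith [this]
  · have hn : q*(B'+m') + r' + 1 ≤ q*(B+m) + r := by nlinarith
    have := lemA q k (B+m) r (B'+m') r' u u' hq hk hM hM' hr0 hrq hr'0 hr'q hu hu' hn
    nlinarith [this]

private lemma ident (q : ℕ) (hq3 : 3 ≤ q) (b h e : ℕ) (hh : h ≤ 1) :
    echI q b h e = (((2*(e:ℤ)*h + (q+1)*h + 2*q*b^2 + (q+3)*b + 4*e*b + 2*q*h*b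
      + 2*q*((e/q : ℕ):ℤ)^2 + 4*((e/q:ℕ):ℤ)*((e%q:ℕ):ℤ) + (q+1)*((e/q:ℕ):ℤ)
      + 2*((e%q:ℕ):ℤ) + ((2*(e%q)/q : ℕ):ℤ)*(2*((e%q:ℕ):ℤ) - q + 1)) : ℤ) : ℚ) := by
  have hq0 : ((q:ℚ)) ≠ 0 := Nat.cast_ne_zero.mpr (by omega)
  have hh2 : ((h:ℚ))^2 = h := by interval_cases h <;> norm_num
  have h1 : e = q * (e / q) + e % q := (Nat.div_add_mod e q).symm
  unfold echI
  generalize hu : 2*(e%q)/q = u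
  generalize hr : e % q = r at h1 ⊢
  generalize hm : e / q = m at h1 ⊢
  have h1q : (e:ℚ) = q*m + r := by exact_mod_cast congrArg (Nat.cast (R := ℚ)) h1
  push_cast
  rw [hh2, h1q]
  field_simp
  ring

/-- degree is a monotone nondecreasing function of the ECH index:
if `I(B,H,E) < I(B',H',E')` then `2qB + qH + 2E ≤ 2qB' + qH' + 2E'`. -/
theorem stmt_16 (q : ℕ) (hq3 : 3 ≤ q) (hqodd : Odd q)
    (B H E B' H' E' : ℕ) (hH : H ≤ 1) (hH' : H' ≤ 1)
    (hlt : echI q B H E < echI q B' H' E') :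
    2 * q * B + q * H + 2 * E ≤ 2 * q * B' + q * H' + 2 * E' := by
  obtain ⟨kk, hkk⟩ := hqodd
  have hk1 : 1 ≤ kk := by omega
  rw [ident q hq3 B H E hH, ident q hq3 B' H' E' hH'] at hlt
  have hZ : (2*(E:ℤ)*H + (q+1)*H + 2*q*B^2 + (q+3)*B + 4*E*B + 2*q*H*B
      + 2*q*((E/q : ℕ):ℤ)^2 + 4*((E/q:ℕ):ℤ)*((E%q:ℕ):ℤ) + (q+1)*((E/q:ℕ):ℤ)
      + 2*((E%q:ℕ):ℤ) + ((2*(E%q)/q : ℕ):ℤ)*(2*((E%q:ℕ):ℤ) - q + 1))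
      < (2*(E':ℤ)*H' + (q+1)*H' + 2*q*B'^2 + (q+3)*B' + 4*E'*B' + 2*q*H'*B'
      + 2*q*((E'/q : ℕ):ℤ)^2 + 4*((E'/q:ℕ):ℤ)*((E'%q:ℕ):ℤ) + (q+1)*((E'/q:ℕ):ℤ)
      + 2*((E'%q:ℕ):ℤ) + ((2*(E'%q)/q : ℕ):ℤ)*(2*((E'%q:ℕ):ℤ) - q + 1)) := by
    exact_mod_cast hlt
  by_contra hcon
  push_neg at hcon
  have hd : 2*(q:ℤ)*B' + q*H' + 2*E' + 1 ≤ 2*(q:ℤ)*B + q*H + 2*E := by exact_mod_cast hcon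
  have hq0 : 0 < q := by omega
  have hdmE : (E:ℤ) = q*((E/q:ℕ):ℤ) + ((E%q:ℕ):ℤ) := by
    exact_mod_cast congrArg (Nat.cast (R := ℤ)) (Nat.div_add_mod E q).symm
  have hdmE' : (E':ℤ) = q*((E'/q:ℕ):ℤ) + ((E'%q:ℕ):ℤ) := by
    exact_mod_cast congrArg (Nat.cast (R := ℤ)) (Nat.div_add_mod E' q).symm
  have hmodE : ((E%q:ℕ):ℤ) < q := by exact_mod_cast Nat.mod_lt _ hq0
  have hmodE' : ((E'%q:ℕ):ℤ) < q := by exact_mod_cast Nat.mod_lt _ hq0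
  have huE : ((2*(E%q)/q : ℕ):ℤ) = 0 ∧ 2*((E%q:ℕ):ℤ) < q
      ∨ ((2*(E%q)/q : ℕ):ℤ) = 1 ∧ (q:ℤ) ≤ 2*((E%q:ℕ):ℤ) := by
    rcases lt_or_ge (2*(E%q)) q with hc | hc
    · exact Or.inl ⟨by exact_mod_cast Nat.div_eq_of_lt hc, by exact_mod_cast hc⟩
    · refine Or.inr ⟨?_, by exact_mod_cast hc⟩
      have h2 : 2*(E%q) < 2*q := by have := Nat.mod_lt E hq0; omega
      have : 2*(E%q)/q = 1 := Nat.div_eq_of_lt_le (by omega) (by omega)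
      exact_mod_cast this
  have huE' : ((2*(E'%q)/q : ℕ):ℤ) = 0 ∧ 2*((E'%q:ℕ):ℤ) < q
      ∨ ((2*(E'%q)/q : ℕ):ℤ) = 1 ∧ (q:ℤ) ≤ 2*((E'%q:ℕ):ℤ) := by
    rcases lt_or_ge (2*(E'%q)) q with hc | hc
    · exact Or.inl ⟨by exact_mod_cast Nat.div_eq_of_lt hc, by exact_mod_cast hc⟩
    · refine Or.inr ⟨?_, by exact_mod_cast hc⟩
      have h2 : 2*(E'%q) < 2*q := by have := Nat.mod_lt E' hq0; omega
      have : 2*(E'%q)/q = 1 := Nat.div_eq_of_lt_le (by omega) (by omega)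
      exact_mod_cast this
  have hHZ : (H:ℤ) = 0 ∨ (H:ℤ) = 1 := by omega
  have hHZ' : (H':ℤ) = 0 ∨ (H':ℤ) = 1 := by omega
  have := glue (q:ℤ) (kk:ℤ) (B:ℤ) (H:ℤ) (E:ℤ) ((E/q:ℕ):ℤ) ((E%q:ℕ):ℤ)
      ((2*(E%q)/q : ℕ):ℤ) (B':ℤ) (H':ℤ) (E':ℤ) ((E'/q:ℕ):ℤ) ((E'%q:ℕ):ℤ)
      ((2*(E'%q)/q : ℕ):ℤ) (by exact_mod_cast hkk) (by exact_mod_cast hk1)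
      (by positivity) (by positivity) (by positivity) (by positivity)
      hHZ hHZ' hdmE hdmE' (by positivity) hmodE (by positivity) hmodE' huE huE' hd
  linarith [this, hZ]
end
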